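/- arXiv:2111.01422 — 3 statements merged into one kernel-verified Lean document; each statement's English description precedes it below -/
import Mathlib

section
/- Let D be an h-layer S-T DAG with arc capacities U, and let f be an α-blocking S-T flow (i.e., for every S-T path P there is an arc a ∈ P with f_a ≥ α·U_a). Then f is (α/h)-approximate: val(f) ≥ (α/h)·val(f*) where f* is a maximum S-T flow. -/
/-!
Weak duality against a cut. For each path choose an arc on which the blocking flow `g` carries at
least `α` times the capacity; these arcs form a set `B` meeting every path. Any feasible flow `f*`
sends its value across `B`, so `α · val f* ≤ α · U(B) ≤ g(B)`, and since every path has at most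
`h` arcs, `g(B) ≤ h · val g`.
-/

open Finset

namespace PathDecomposition

variable {Arc : Type} [DecidableEq Arc] (Ps : Finset (List Arc)) (w : List Arc → ℝ)

def arcFlow (a : Arc) : ℝ := ∑ P ∈ Ps, if a ∈ P then w P else 0

theorem sum_arcFlow (B : Finset Arc) :
    ∑ a ∈ B, arcFlow Ps w a = ∑ P ∈ Ps, #(B ∩ P.toFinset) * w P := by
  simp_rw [arcFlow]
  rw [sum_comm]
  refine sum_congr rfl fun P _ => ?_
  simp_rw [← List.mem_toFinset, sum_ite_mem, sum_const, nsmul_eq_mul]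

variable {Ps w}

theorem sum_le_sum_arcFlow_of_forall_exists_mem (hw : ∀ P ∈ Ps, 0 ≤ w P) {B : Finset Arc}
    (hB : ∀ P ∈ Ps, ∃ a ∈ P, a ∈ B) : ∑ P ∈ Ps, w P ≤ ∑ a ∈ B, arcFlow Ps w a := by
  rw [sum_arcFlow]
  refine sum_le_sum fun P hP => le_mul_of_one_le_left (hw P hP) ?_
  obtain ⟨a, haP, haB⟩ := hB P hP
  exact_mod_cast card_pos.mpr ⟨a, mem_inter.mpr ⟨haB, List.mem_toFinset.mpr haP⟩⟩

theorem sum_arcFlow_le_mul_sum (hw : ∀ P ∈ Ps, 0 ≤ w P) {h : ℕ}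
    (hlen : ∀ P ∈ Ps, P.length ≤ h) (B : Finset Arc) :
    ∑ a ∈ B, arcFlow Ps w a ≤ h * ∑ P ∈ Ps, w P := by
  rw [sum_arcFlow, mul_sum]
  refine sum_le_sum fun P hP => mul_le_mul_of_nonneg_right ?_ (hw P hP)
  have hcard : #(B ∩ P.toFinset) ≤ h :=
    (card_le_card inter_subset_right).trans (P.toFinset_card_le.trans (hlen P hP))
  exact_mod_cast hcard

end PathDecomposition

open PathDecomposition

/-- Flows are given by path decompositions over the finite set `Ps` of all S-T paths of the DAG
(each has at most `h` arcs): `g` decomposes the blocking flow, `fstar` an arbitrary feasible flow,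
in particular a maximum one. -/
theorem blocking_flow_approx_general
    {Arc : Type} [DecidableEq Arc]
    (h : ℕ)
    (Ps : Finset (List Arc))
    (hlen : ∀ P ∈ Ps, P.length ≤ h)
    (U : Arc → ℝ)
    (α : ℝ) (hα0 : 0 < α)
    (g fstar : List Arc → ℝ)
    (hg0 : ∀ P, 0 ≤ g P) (hf0 : ∀ P, 0 ≤ fstar P)
    (hfcap : ∀ a : Arc, ∑ P ∈ Ps, (if a ∈ P then fstar P else 0) ≤ U a)
    (hblock : ∀ P ∈ Ps, ∃ a ∈ P, α * U a ≤ ∑ Q ∈ Ps, (if a ∈ Q then g Q else 0)) :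
    (α / h) * ∑ P ∈ Ps, fstar P ≤ ∑ P ∈ Ps, g P := by
  choose blockingArc hmem hblocking using hblock
  set B := Ps.attach.image fun P => blockingArc P.1 P.2
  have hcut : ∀ P ∈ Ps, ∃ a ∈ P, a ∈ B := fun P hP =>
    ⟨_, hmem P hP, mem_image_of_mem _ (mem_attach _ ⟨P, hP⟩)⟩
  have key : α * ∑ P ∈ Ps, fstar P ≤ h * ∑ P ∈ Ps, g P :=
    calc α * ∑ P ∈ Ps, fstar P
        ≤ α * ∑ a ∈ B, arcFlow Ps fstar a := by
          gcongr
          exact sum_le_sum_arcFlow_of_forall_exists_mem (fun P _ => hf0 P) hcut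
      _ ≤ ∑ a ∈ B, α * U a := by
          rw [mul_sum]
          gcongr with a
          exact hfcap a
      _ ≤ ∑ a ∈ B, arcFlow Ps g a := by
          refine sum_le_sum fun a ha => ?_
          obtain ⟨⟨P, hP⟩, -, rfl⟩ := mem_image.mp ha
          exact hblocking P hP
      _ ≤ h * ∑ P ∈ Ps, g P := sum_arcFlow_le_mul_sum (fun P _ => hg0 P) hlen B
  rw [div_mul_eq_mul_div]
  exact div_le_of_le_mul₀ h.cast_nonneg (sum_nonneg fun P _ => hg0 P) (by linarith)

/-- In an `h`-layer `S`-`T` DAG, any `α`-blocking flow is `(α/h)`-approximate.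
We represent flows via their path decompositions over the finite set `Ps` of all (h-length)
S-T paths of the DAG; `g` is the path decomposition of the blocking flow `f`, `fstar` is an
arbitrary feasible S-T flow (in particular the maximum one). -/
theorem blocking_flow_approx
    {Arc : Type} [DecidableEq Arc]
    (h : ℕ) (hh : 1 ≤ h)
    (Ps : Finset (List Arc))
    (hlen : ∀ P ∈ Ps, P.length ≤ h)
    (hnodup : ∀ P ∈ Ps, P.Nodup)
    (U : Arc → ℝ) (hU : ∀ a, 0 ≤ U a)
    (α : ℝ) (hα0 : 0 < α) (hα1 : α ≤ 1)
    (g fstar : List Arc → ℝ)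
    (hg0 : ∀ P, 0 ≤ g P) (hf0 : ∀ P, 0 ≤ fstar P)
    (hgs : ∀ P ∉ Ps, g P = 0) (hfs : ∀ P ∉ Ps, fstar P = 0)
    (hgcap : ∀ a : Arc, ∑ P ∈ Ps, (if a ∈ P then g P else 0) ≤ U a)
    (hfcap : ∀ a : Arc, ∑ P ∈ Ps, (if a ∈ P then fstar P else 0) ≤ U a)
    (hblock : ∀ P ∈ Ps, ∃ a ∈ P, α * U a ≤ ∑ Q ∈ Ps, (if a ∈ Q then g Q else 0)) :
    (α / h) * ∑ P ∈ Ps, fstar P ≤ ∑ P ∈ Ps, g P :=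
  blocking_flow_approx_general h Ps hlen U α hα0 g fstar hg0 hf0 hfcap hblock
end

section
/- Let f̂ be an integral flow on an h-layer S-T DAG with total deficit deficit(f̂) = ∑_{v∉S∪T} |∑_{a∈δ⁺(v)} f̂_a − ∑_{a∈δ⁻(v)} f̂_a|. Then there exists an integral S-T flow f' that is a subflow of f̂ (f'_a ≤ f̂_a for all a) with val(f') ≥ val(f̂) − deficit(f̂). -/
/-!
Removing one unit of flow from an arc does not decrease the potential `value - deficit`
provided the arc leaves an internal vertex of positive net outflow or enters one of negative
net outflow: the imbalance there drops by one, while at the other end of the arc either the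
imbalance grows by at most one (an internal vertex) or the value drops by one (a vertex of
`S`), never both. As long as some internal vertex is unbalanced such an arc carrying positive
flow exists, so repeating the step, which lowers the total flow, ends at a balanced integral
subflow whose value is at least the initial potential.
-/

open Finset

namespace ArcFlow

variable {V : Type*} [DecidableEq V] (A : Finset (V × V))

def netOutflow (f : V × V → ℤ) (v : V) : ℤ :=
  ∑ a ∈ A.filter (fun a => a.1 = v), f a - ∑ a ∈ A.filter (fun a => a.2 = v), f a

def value (S : Finset V) (f : V × V → ℤ) : ℤ :=
  ∑ a ∈ A.filter (fun a => a.1 ∈ S), f a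

def internal [Fintype V] (S T : Finset V) : Finset V :=
  univ.filter (fun v => v ∉ S ∧ v ∉ T)

def deficit [Fintype V] (S T : Finset V) (f : V × V → ℤ) : ℤ :=
  ∑ v ∈ internal S T, |netOutflow A f v|

def IsImprovingArc (f : V × V → ℤ) (v x : V) (a : V × V) : Prop :=
  (a = (v, x) ∧ 0 < netOutflow A f v) ∨ (a = (x, v) ∧ netOutflow A f v < 0)

variable {A} {f : V × V → ℤ} {a : V × V}

lemma sum_sub_single (s : Finset (V × V)) (f : V × V → ℤ) (a : V × V) :
    ∑ b ∈ s, (f - Pi.single a 1 : V × V → ℤ) b = ∑ b ∈ s, f b - if a ∈ s then 1 else 0 := by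
  simp only [Pi.sub_apply, sum_sub_distrib, sum_pi_single']

lemma netOutflow_sub_single (ha : a ∈ A) (w : V) :
    netOutflow A (f - Pi.single a 1) w
      = netOutflow A f w - (if a.1 = w then 1 else 0) + (if a.2 = w then 1 else 0) := by
  simp only [netOutflow, sum_sub_single, mem_filter, ha, true_and]
  ring

lemma value_sub_single (ha : a ∈ A) (S : Finset V) :
    value A S (f - Pi.single a 1) = value A S f - if a.1 ∈ S then 1 else 0 := by
  simp only [value, sum_sub_single, mem_filter, ha, true_and]

lemma deficit_nonneg [Fintype V] (S T : Finset V) (f : V × V → ℤ) : 0 ≤ deficit A S T f :=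
  sum_nonneg fun _ _ => abs_nonneg _

lemma exists_isImprovingArc (hf : 0 ≤ f) {v : V} (hv : netOutflow A f v ≠ 0) :
    ∃ a ∈ A, 0 < f a ∧ ∃ x, IsImprovingArc A f v x a := by
  have hout := sum_nonneg fun a (_ : a ∈ A.filter (fun a => a.1 = v)) => hf a
  have hin := sum_nonneg fun a (_ : a ∈ A.filter (fun a => a.2 = v)) => hf a
  unfold netOutflow at hv
  rcases hv.lt_or_gt with hneg | hpos
  · obtain ⟨a, ha, hfa⟩ := exists_lt_of_sum_lt (f := fun _ => 0) (g := f) (s := A.filter (fun a => a.2 = v))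
      (by rw [sum_const_zero]; linarith)
    rw [mem_filter] at ha
    exact ⟨a, ha.1, hfa, a.1, Or.inr ⟨by rw [← ha.2], by unfold netOutflow; linarith⟩⟩
  · obtain ⟨a, ha, hfa⟩ := exists_lt_of_sum_lt (f := fun _ => 0) (g := f) (s := A.filter (fun a => a.1 = v))
      (by rw [sum_const_zero]; linarith)
    rw [mem_filter] at ha
    exact ⟨a, ha.1, hfa, a.2, Or.inl ⟨by rw [← ha.2], by unfold netOutflow; linarith⟩⟩

lemma abs_netOutflow_sub_single_le (ha : a ∈ A) (hloop : a.1 ≠ a.2) {v x : V}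
    (hax : IsImprovingArc A f v x a) (w : V) :
    |netOutflow A (f - Pi.single a 1) w|
      ≤ |netOutflow A f w| - (if w = v then 1 else 0) + (if w = x then 1 else 0) := by
  rw [netOutflow_sub_single ha]
  rcases hax with ⟨rfl, h⟩ | ⟨rfl, h⟩ <;> dsimp only at hloop ⊢ <;> split_ifs <;> grind

variable [Fintype V] {S T : Finset V}

lemma deficit_sub_single_le (ha : a ∈ A) (hloop : a.1 ≠ a.2) {v x : V}
    (hax : IsImprovingArc A f v x a) (hv : v ∈ internal S T) :
    deficit A S T (f - Pi.single a 1)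
      ≤ deficit A S T f - 1 + if x ∈ internal S T then 1 else 0 := by
  calc deficit A S T (f - Pi.single a 1)
      ≤ ∑ w ∈ internal S T,
          (|netOutflow A f w| - (if w = v then 1 else 0) + (if w = x then 1 else 0)) :=
        sum_le_sum fun w _ => abs_netOutflow_sub_single_le ha hloop hax w
    _ = deficit A S T f - 1 + if x ∈ internal S T then 1 else 0 := by
        rw [sum_add_distrib, sum_sub_distrib, sum_ite_eq', sum_ite_eq', if_pos hv]
        rfl

lemma value_sub_deficit_le_sub_single (ha : a ∈ A) (hloop : a.1 ≠ a.2) {v x : V}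
    (hax : IsImprovingArc A f v x a) (hv : v ∈ internal S T) :
    value A S f - deficit A S T f
      ≤ value A S (f - Pi.single a 1) - deficit A S T (f - Pi.single a 1) := by
  have hdef := deficit_sub_single_le ha hloop hax hv
  have hvS : v ∉ S := (mem_filter.1 hv).2.1
  rw [value_sub_single ha]
  have hxS : x ∈ internal S T → x ∉ S := fun hx => (mem_filter.1 hx).2.1
  rcases hax with ⟨rfl, -⟩ | ⟨rfl, -⟩ <;> dsimp only <;> split_ifs at hdef ⊢ <;> grind

theorem exists_balanced_subflow (hloop : ∀ a ∈ A, a.1 ≠ a.2) (f : V × V → ℤ) (hf : 0 ≤ f) :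
    ∃ f', 0 ≤ f' ∧ f' ≤ f ∧ (∀ v, v ∉ S → v ∉ T → netOutflow A f' v = 0) ∧
      value A S f - deficit A S T f ≤ value A S f' := by
  by_cases hbal : ∀ v, v ∉ S → v ∉ T → netOutflow A f v = 0
  · exact ⟨f, hf, le_rfl, hbal, sub_le_self _ (deficit_nonneg S T f)⟩
  push Not at hbal
  obtain ⟨v, hvS, hvT, hv⟩ := hbal
  obtain ⟨a, ha, hfa, x, hax⟩ := exists_isImprovingArc hf hv
  have hv : v ∈ internal S T := mem_filter.2 ⟨mem_univ v, hvS, hvT⟩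
  have hg : 0 ≤ f - Pi.single a 1 := fun b => by
    rw [Pi.sub_apply, Pi.zero_apply, sub_nonneg, Pi.single_apply]
    split_ifs with hb
    exacts [hb ▸ hfa, hf b]
  have hdecr : (∑ b ∈ A, (f - Pi.single a 1 : V × V → ℤ) b).toNat < (∑ b ∈ A, f b).toNat := by
    have := single_le_sum (fun b _ => hf b) ha
    rw [sum_sub_single, if_pos ha]
    omega
  obtain ⟨f', hf'0, hf'g, hbal', hval⟩ := exists_balanced_subflow hloop (f - Pi.single a 1) hg
  exact ⟨f', hf'0, hf'g.trans (sub_le_self f (Pi.single_nonneg.2 zero_le_one)), hbal',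
    (value_sub_deficit_le_sub_single ha (hloop a ha) hax hv).trans hval⟩
termination_by (∑ b ∈ A, f b).toNat
decreasing_by exact hdecr

end ArcFlow

open ArcFlow in
theorem integral_subflow_extraction_general
    {V : Type} [Fintype V] [DecidableEq V]
    (h : ℕ) (A : Finset (V × V))
    (layer : V → ℕ)
    (hlayer : ∀ a ∈ A, layer a.1 < layer a.2 ∧ layer a.2 ≤ h)
    (S T : Finset V)
    (fhat : V × V → ℤ)
    (hnn : ∀ a, 0 ≤ fhat a) :
    ∃ f' : V × V → ℤ,
      (∀ a, 0 ≤ f' a ∧ f' a ≤ fhat a) ∧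
      (∀ v, v ∉ S → v ∉ T →
        ∑ a ∈ A.filter (fun a => a.1 = v), f' a = ∑ a ∈ A.filter (fun a => a.2 = v), f' a) ∧
      (∑ a ∈ A.filter (fun a => a.1 ∈ S), fhat a)
        - (∑ v ∈ Finset.univ.filter (fun v => v ∉ S ∧ v ∉ T),
            |(∑ a ∈ A.filter (fun a => a.1 = v), fhat a)
              - ∑ a ∈ A.filter (fun a => a.2 = v), fhat a|)
        ≤ ∑ a ∈ A.filter (fun a => a.1 ∈ S), f' a := by
  have hloop : ∀ a ∈ A, a.1 ≠ a.2 := fun a ha he => (hlayer a ha).1.ne (congrArg layer he)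
  obtain ⟨f', hf'0, hf'le, hbal, hval⟩ := exists_balanced_subflow (S := S) (T := T) hloop fhat hnn
  exact ⟨f', fun a => ⟨hf'0 a, hf'le a⟩, fun v hvS hvT => sub_eq_zero.1 (hbal v hvS hvT), hval⟩

/-- extracting an integral S-T subflow.  `D` is an `h`-layer S-T DAG
(witnessed by `layer`, with `S` the first layer and `T` the last), `fhat` is an integral
flow (nonnegative integer arc values bounded by capacities, supported on the arcs `A`).
Then there is an integral subflow `f'` of `fhat` with zero deficit at every vertex outside
`S ∪ T` whose value is at least `val(fhat) - deficit(fhat)`. -/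
theorem integral_subflow_extraction
    {V : Type} [Fintype V] [DecidableEq V]
    (h : ℕ) (A : Finset (V × V))
    (layer : V → ℕ)
    (hlayer : ∀ a ∈ A, layer a.1 < layer a.2 ∧ layer a.2 ≤ h)
    (S T : Finset V)
    (hS : ∀ v, v ∈ S ↔ layer v = 0) (hT : ∀ v, v ∈ T ↔ layer v = h)
    (U : V × V → ℤ)
    (fhat : V × V → ℤ)
    (hnn : ∀ a, 0 ≤ fhat a) (hcap : ∀ a, fhat a ≤ U a)
    (hsupp : ∀ a ∉ A, fhat a = 0) :
    ∃ f' : V × V → ℤ,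
      (∀ a, 0 ≤ f' a ∧ f' a ≤ fhat a) ∧
      (∀ v, v ∉ S → v ∉ T →
        ∑ a ∈ A.filter (fun a => a.1 = v), f' a = ∑ a ∈ A.filter (fun a => a.2 = v), f' a) ∧
      (∑ a ∈ A.filter (fun a => a.1 ∈ S), fhat a)
        - (∑ v ∈ Finset.univ.filter (fun v => v ∉ S ∧ v ∉ T),
            |(∑ a ∈ A.filter (fun a => a.1 = v), fhat a)
              - ∑ a ∈ A.filter (fun a => a.2 = v), fhat a|)
        ≤ ∑ a ∈ A.filter (fun a => a.1 ∈ S), f' a :=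
  integral_subflow_extraction_general h A layer hlayer S T fhat hnn
end

section
/- Let C be a collection of cycles in a graph G with congestion c (every edge lies in at most c cycles of C) and diameter d (every cycle has at most d edges). Then there exists a subcollection C' ⊆ C of pairwise edge-disjoint cycles such that the number of edges covered by C' is at least (1/(d²c²)) times the number of edges covered by C. -/
/-!
Take a maximal edge-disjoint subfamily `T` of `Cs`. By maximality every nonempty cycle of `Cs` shares an
edge with some cycle of `T`, so each covered edge lies on one of the at most `c` cycles through
some edge of `T`, each of which has at most `d` edges. Hence `Cs` covers at most `c d` times as
many edges as `T`, and `c d ≤ c² d²` unless `c d = 0`, when the bound is trivial.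
-/

open Finset

namespace Finset

variable {E : Type*} [DecidableEq E]

theorem exists_pairwiseDisjoint_subset_forall_not_disjoint (Cs : Finset (Finset E)) :
    ∃ T ⊆ Cs, (T : Set (Finset E)).PairwiseDisjoint id ∧
      ∀ C ∈ Cs, C.Nonempty → ∃ D ∈ T, ¬Disjoint C D := by
  classical
  obtain ⟨T, hTmem, hTmax⟩ := (Cs.powerset.filter fun T : Finset (Finset E) =>
    (T : Set (Finset E)).PairwiseDisjoint id).exists_maximal ⟨∅, by simp⟩
  rw [mem_filter, mem_powerset] at hTmem
  obtain ⟨hTCs, hTdisj⟩ := hTmem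
  refine ⟨T, hTCs, hTdisj, fun C hC hCne => ?_⟩
  by_contra! hCdisj
  have hinsert : insert C T ∈ Cs.powerset.filter fun T : Finset (Finset E) =>
      (T : Set (Finset E)).PairwiseDisjoint id := by
    rw [mem_filter, mem_powerset, coe_insert]
    exact ⟨insert_subset hC hTCs, hTdisj.insert fun D hD _ => hCdisj D hD⟩
  have hCT : C ∈ T := hTmax hinsert (subset_insert C T) (mem_insert_self C T)
  exact hCne.ne_empty (disjoint_self.mp (hCdisj C hCT))

theorem biUnion_subset_biUnion_filter_mem_of_forall_not_disjoint
    {Cs T : Finset (Finset E)} (hT : ∀ C ∈ Cs, C.Nonempty → ∃ D ∈ T, ¬Disjoint C D) :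
    Cs.biUnion id ⊆ (T.biUnion id).biUnion fun f => (Cs.filter (f ∈ ·)).biUnion id := by
  intro e he
  obtain ⟨C, hC, heC⟩ := mem_biUnion.mp he
  obtain ⟨D, hD, hCD⟩ := hT C hC ⟨e, heC⟩
  obtain ⟨f, hfC, hfD⟩ := not_disjoint_iff.mp hCD
  exact mem_biUnion.mpr ⟨f, mem_biUnion.mpr ⟨D, hD, hfD⟩,
    mem_biUnion.mpr ⟨C, mem_filter.mpr ⟨hC, hfC⟩, heC⟩⟩

theorem card_biUnion_filter_mem_le {Cs : Finset (Finset E)} {c d : ℕ}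
    (hcong : ∀ e : E, (Cs.filter (e ∈ ·)).card ≤ c) (hdiam : ∀ C ∈ Cs, C.card ≤ d) (f : E) :
    ((Cs.filter (f ∈ ·)).biUnion id).card ≤ c * d :=
  (card_biUnion_le_card_mul _ _ d fun C hC => hdiam C (mem_filter.mp hC).1).trans
    (Nat.mul_le_mul_right d (hcong f))

end Finset

theorem div_sq_mul_sq_le_of_le_mul {a b c d : ℕ} (h : a ≤ b * (c * d)) :
    (a : ℝ) / ((d : ℝ) ^ 2 * (c : ℝ) ^ 2) ≤ b := by
  rcases Nat.eq_zero_or_pos c with rfl | hc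
  · simp
  rcases Nat.eq_zero_or_pos d with rfl | hd
  · simp
  have hcd : c * d ≤ d ^ 2 * c ^ 2 := by
    calc c * d = 1 * (c * d) := (one_mul _).symm
      _ ≤ (c * d) * (c * d) := Nat.mul_le_mul_right _ (Nat.mul_pos hc hd)
      _ = d ^ 2 * c ^ 2 := by ring
  rw [div_le_iff₀ (by positivity)]
  exact_mod_cast h.trans (Nat.mul_le_mul_left b hcd)

/-- cycle decongestion.  Let `Cs` be a collection of cycles (each identified
with its edge set) in a graph with congestion `c` (every edge lies in at most `c` cycles)
and diameter `d` (every cycle has at most `d` edges).  Then there is a subcollection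
`Cs' ⊆ Cs` of pairwise edge-disjoint cycles covering at least a `1/(d²c²)` fraction of the
edges covered by `Cs`. -/
theorem cycle_decongestion
    {E : Type} [DecidableEq E]
    (Cs : Finset (Finset E)) (c d : ℕ)
    (hcong : ∀ e : E, (Cs.filter (fun C => e ∈ C)).card ≤ c)
    (hdiam : ∀ C ∈ Cs, C.card ≤ d) :
    ∃ Cs' ⊆ Cs, (∀ C₁ ∈ Cs', ∀ C₂ ∈ Cs', C₁ ≠ C₂ → Disjoint C₁ C₂) ∧
      ((Cs.biUnion id).card : ℝ) / ((d : ℝ) ^ 2 * (c : ℝ) ^ 2)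
        ≤ ((Cs'.biUnion id).card : ℝ) := by
  obtain ⟨T, hTCs, hTdisj, hTmeets⟩ := exists_pairwiseDisjoint_subset_forall_not_disjoint Cs
  have hcard : (Cs.biUnion id).card ≤ (T.biUnion id).card * (c * d) :=
    (card_le_card (biUnion_subset_biUnion_filter_mem_of_forall_not_disjoint hTmeets)).trans
      (card_biUnion_le_card_mul _ _ _ fun f _ => card_biUnion_filter_mem_le hcong hdiam f)
  exact ⟨T, hTCs, fun C₁ h₁ C₂ h₂ hne => hTdisj h₁ h₂ hne, div_sq_mul_sq_le_of_le_mul hcard⟩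
end
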